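/- arXiv:1509.05395 — 4 statements merged into one kernel-verified Lean document; each statement's English description precedes it below -/
import Mathlib

section
/- If a strictly feasible pair exists, then every minimizer (p*, y*) of the network delay over the feasible set satisfies p*_l > σ_l(e^{2 t_l} − 1) for every data link l; in particular D(p*) < +∞. -/
open BigOperators ENNReal

/-- A single-slot energy harvesting network with energy cooperation: nodes `N`,
data links `L` (each with a start node, fixed flow `t l > 0` and noise power `σ l > 0`),
energy links `Q` (each with a start node, end node and transfer efficiency `α q ∈ (0,1]`),
and harvested energies `E n ≥ 0`. -/
structure Net where
  N : Type
  L : Type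
  Q : Type
  [fintypeN : Fintype N]
  [fintypeL : Fintype L]
  [fintypeQ : Fintype Q]
  [decEqN : DecidableEq N]
  startD : L → N
  startE : Q → N
  endE : Q → N
  α : Q → ℝ
  t : L → ℝ
  σ : L → ℝ
  E : N → ℝ
  hα : ∀ q, 0 < α q ∧ α q ≤ 1
  ht : ∀ l, 0 < t l
  hσ : ∀ l, 0 < σ l
  hE : ∀ n, 0 ≤ E n

attribute [instance] Net.fintypeN Net.fintypeL Net.fintypeQ Net.decEqN

/-- A pair `(p, y)` is feasible: nonnegative energy transfers, link powers at least
`σ_l (e^{2 t_l} − 1)`, and the energy constraint at every node. -/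
def Net.Feasible (net : Net) (p : net.L → ℝ) (y : net.Q → ℝ) : Prop :=
  (∀ q, 0 ≤ y q) ∧
  (∀ l, net.σ l * (Real.exp (2 * net.t l) - 1) ≤ p l) ∧
  (∀ n : net.N,
    (∑ l ∈ Finset.univ.filter (fun l => net.startD l = n), p l) +
      (∑ q ∈ Finset.univ.filter (fun q => net.startE q = n), y q) ≤
    net.E n + ∑ q ∈ Finset.univ.filter (fun q => net.endE q = n), net.α q * y q)

/-- Strict feasibility: feasible with `p_l > σ_l (e^{2 t_l} − 1)` on every data link. -/
def Net.StrictFeasible (net : Net) (p : net.L → ℝ) (y : net.Q → ℝ) : Prop :=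
  net.Feasible p y ∧ ∀ l, net.σ l * (Real.exp (2 * net.t l) - 1) < p l

/-- The network delay `D(p) = ∑_l t_l / ((1/2)·ln(1 + p_l/σ_l) − t_l)`, with the
convention that it is `+∞` if `(1/2)·ln(1 + p_l/σ_l) ≤ t_l` for some link `l`. -/
noncomputable def Net.Delay (net : Net) (p : net.L → ℝ) : ℝ≥0∞ :=
  if ∀ l, net.t l < (1 / 2) * Real.log (1 + p l / net.σ l) then
    ENNReal.ofReal (∑ l, net.t l / ((1 / 2) * Real.log (1 + p l / net.σ l) - net.t l))
  else ⊤

/-- A minimizer of the network delay over feasible pairs. -/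
def Net.IsMinimizer (net : Net) (p : net.L → ℝ) (y : net.Q → ℝ) : Prop :=
  net.Feasible p y ∧ ∀ p' y', net.Feasible p' y' → net.Delay p ≤ net.Delay p'

/-- The marginal quantity
`g(p) = (t/(2σ)) · ((1/2)·ln(1 + p/σ) − t)^{−2} · (1 + p/σ)^{−1}`. -/
noncomputable def gMarg (t σ p : ℝ) : ℝ :=
  t / (2 * σ) / ((1 / 2) * Real.log (1 + p / σ) - t) ^ 2 / (1 + p / σ)

lemma strict_iff (t σ p : ℝ) (hσ : 0 < σ) (hx : 0 < 1 + p / σ) :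
    σ * (Real.exp (2 * t) - 1) < p ↔ t < (1 / 2) * Real.log (1 + p / σ) := by
  have h1 : σ * (Real.exp (2 * t) - 1) < p ↔ Real.exp (2 * t) < 1 + p / σ := by
    rw [mul_comm, ← lt_div_iff₀ hσ, sub_lt_iff_lt_add]
    constructor <;> intro h <;> linarith
  rw [h1]
  rw [show (1 : ℝ) / 2 * Real.log (1 + p / σ) = Real.log (1 + p / σ) / 2 by ring]
  rw [lt_div_iff₀ (by norm_num : (0:ℝ) < 2), show t * 2 = 2 * t by ring]
  constructor
  · intro h
    calc 2 * t = Real.log (Real.exp (2 * t)) := (Real.log_exp _).symm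
    _ < Real.log (1 + p / σ) := Real.log_lt_log (Real.exp_pos _) h
  · intro h
    have h2 := Real.exp_lt_exp.mpr h
    rwa [Real.exp_log hx] at h2

lemma pos_aux (t σ p : ℝ) (hσ : 0 < σ) (ht : 0 < t)
    (hp : σ * (Real.exp (2 * t) - 1) ≤ p) : 0 < 1 + p / σ := by
  have h1 : (1:ℝ) < Real.exp (2 * t) := by
    rw [show (1:ℝ) = Real.exp 0 by simp]
    exact Real.exp_lt_exp.mpr (by linarith)
  have hp0 : 0 < p := lt_of_lt_of_le (by nlinarith) hp
  positivity

/-- If a strictly feasible pair exists, then every minimizer `(p*, y*)`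
of the network delay satisfies `p*_l > σ_l(e^{2 t_l} − 1)` for every data link `l`;
in particular `D(p*) < +∞`. -/
theorem minimizer_strict_and_finite (net : Net)
    (hsf : ∃ p y, net.StrictFeasible p y)
    (pstar : net.L → ℝ) (ystar : net.Q → ℝ)
    (hmin : net.IsMinimizer pstar ystar) :
    (∀ l, net.σ l * (Real.exp (2 * net.t l) - 1) < pstar l) ∧ net.Delay pstar < ⊤ := by
  obtain ⟨p, y, hfeas, hstrict⟩ := hsf
  have hcond : ∀ l, net.t l < (1 / 2) * Real.log (1 + p l / net.σ l) := fun l =>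
    (strict_iff _ _ _ (net.hσ l)
      (pos_aux _ _ _ (net.hσ l) (net.ht l) (le_of_lt (hstrict l)))).mp (hstrict l)
  have hDp : net.Delay p < ⊤ := by
    rw [Net.Delay, if_pos hcond]; exact ENNReal.ofReal_lt_top
  have hle := hmin.2 p y hfeas
  have hlt : net.Delay pstar < ⊤ := lt_of_le_of_lt hle hDp
  have hcond' : ∀ l, net.t l < (1 / 2) * Real.log (1 + pstar l / net.σ l) := by
    by_contra h
    rw [Net.Delay, if_neg h] at hlt
    exact absurd hlt (lt_irrefl _)
  refine ⟨fun l => ?_, hlt⟩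
  exact (strict_iff _ _ _ (net.hσ l)
    (pos_aux _ _ _ (net.hσ l) (net.ht l) (hmin.1.2.1 l))).mpr (hcond' l)
end

section
/- If a strictly feasible pair exists, then at every minimizer (p*, y*) of the network delay, for every node n that has at least one outgoing data link, the energy constraint is tight: ∑_{l : start(l)=n} p*_l + ∑_{q : start(q)=n} y*_q = E_n + ∑_{q : end(q)=n} α_q y*_q. -/
open BigOperators ENNReal

/-- If a strictly feasible pair exists, then at every minimizer
`(p*, y*)` of the network delay, for every node `n` with at least one outgoing
data link, the energy constraint is tight. -/
theorem minimizer_energy_constraint_tight (net : Net)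
    (hsf : ∃ p y, net.StrictFeasible p y)
    (pstar : net.L → ℝ) (ystar : net.Q → ℝ)
    (hmin : net.IsMinimizer pstar ystar) :
    ∀ n : net.N, (∃ l, net.startD l = n) →
      (∑ l ∈ Finset.univ.filter (fun l => net.startD l = n), pstar l) +
        (∑ q ∈ Finset.univ.filter (fun q => net.startE q = n), ystar q) =
      net.E n + ∑ q ∈ Finset.univ.filter (fun q => net.endE q = n), net.α q * ystar q := by
  classical
  rintro n ⟨l0, hl0⟩
  obtain ⟨psf, ysf, hsfeas, hsstrict⟩ := hsf
  obtain ⟨⟨hy, hp, hnode⟩, hopt⟩ := hmin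
  -- basic facts
  have hexpge : ∀ l, (0:ℝ) ≤ net.σ l * (Real.exp (2 * net.t l) - 1) := by
    intro l
    have h1 : (1:ℝ) ≤ Real.exp (2 * net.t l) := by
      have := Real.exp_pos (2 * net.t l)
      have h := Real.one_le_exp_iff.mpr (by nlinarith [net.ht l] : (0:ℝ) ≤ 2 * net.t l)
      exact h
    nlinarith [net.hσ l]
  have hden : ∀ (p : net.L → ℝ), (∀ l, net.σ l * (Real.exp (2 * net.t l) - 1) < p l) →
      ∀ l, net.t l < (1 / 2) * Real.log (1 + p l / net.σ l) := by
    intro p hplt l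
    have hσl := net.hσ l
    have h1 : Real.exp (2 * net.t l) < 1 + p l / net.σ l := by
      have h2 : Real.exp (2 * net.t l) - 1 < p l / net.σ l := by
        rw [lt_div_iff₀ hσl]; nlinarith [hplt l]
      linarith
    have h2 : Real.log (Real.exp (2 * net.t l)) < Real.log (1 + p l / net.σ l) :=
      Real.log_lt_log (Real.exp_pos _) h1
    rw [Real.log_exp] at h2
    linarith
  -- the minimizer's delay is finite, hence the condition holds for pstar
  have hcondsf := hden psf hsstrict
  have hfin : net.Delay pstar ≠ ⊤ := by
    have hle := hopt psf ysf hsfeas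
    have : net.Delay psf ≠ ⊤ := by
      simp only [Net.Delay, if_pos hcondsf]
      exact ENNReal.ofReal_ne_top
    exact fun h => this (top_le_iff.mp (h ▸ hle))
  have hcond : ∀ l, net.t l < (1 / 2) * Real.log (1 + pstar l / net.σ l) := by
    by_contra hc
    exact hfin (by simp only [Net.Delay, if_neg hc])
  -- suppose the constraint at n is not tight
  by_contra hne
  have hlt : (∑ l ∈ Finset.univ.filter (fun l => net.startD l = n), pstar l) +
      (∑ q ∈ Finset.univ.filter (fun q => net.startE q = n), ystar q) <
      net.E n + ∑ q ∈ Finset.univ.filter (fun q => net.endE q = n), net.α q * ystar q :=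
    lt_of_le_of_ne (hnode n) hne
  set ε : ℝ := (net.E n + ∑ q ∈ Finset.univ.filter (fun q => net.endE q = n), net.α q * ystar q)
      - ((∑ l ∈ Finset.univ.filter (fun l => net.startD l = n), pstar l) +
        (∑ q ∈ Finset.univ.filter (fun q => net.startE q = n), ystar q)) with hεdef
  have hε : 0 < ε := by simp only [hεdef]; linarith
  set p' : net.L → ℝ := Function.update pstar l0 (pstar l0 + ε) with hp'def
  have hp'l0 : p' l0 = pstar l0 + ε := Function.update_self _ _ _
  have hp'ne : ∀ l, l ≠ l0 → p' l = pstar l := fun l h => Function.update_of_ne h _ _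
  -- feasibility of the perturbed pair
  have hsumne : ∀ m, m ≠ n →
      (∑ l ∈ Finset.univ.filter (fun l => net.startD l = m), p' l)
      = ∑ l ∈ Finset.univ.filter (fun l => net.startD l = m), pstar l := by
    intro m hm
    refine Finset.sum_congr rfl ?_
    intro l hl
    rw [Finset.mem_filter] at hl
    exact hp'ne l (fun h => hm (by rw [← hl.2, h, hl0]))
  have hl0mem : l0 ∈ Finset.univ.filter (fun l => net.startD l = n) := by
    simp [hl0]
  have hsumn : (∑ l ∈ Finset.univ.filter (fun l => net.startD l = n), p' l)
      = (∑ l ∈ Finset.univ.filter (fun l => net.startD l = n), pstar l) + ε := by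
    rw [← Finset.sum_erase_add _ _ hl0mem, ← Finset.sum_erase_add _ _ hl0mem, hp'l0]
    have : (∑ l ∈ (Finset.univ.filter (fun l => net.startD l = n)).erase l0, p' l)
        = ∑ l ∈ (Finset.univ.filter (fun l => net.startD l = n)).erase l0, pstar l := by
      refine Finset.sum_congr rfl ?_
      intro l hl
      exact hp'ne l (Finset.ne_of_mem_erase hl)
    rw [this]; ring
  have hfeas' : net.Feasible p' ystar := by
    refine ⟨hy, ?_, ?_⟩
    · intro l
      by_cases h : l = l0
      · subst h; rw [hp'l0]; linarith [hp l]
      · rw [hp'ne l h]; exact hp l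
    · intro m
      by_cases hm : m = n
      · subst hm; rw [hsumn]; simp only [hεdef]; linarith
      · rw [hsumne m hm]; exact hnode m
  -- the perturbed delay is strictly smaller
  have hcond' : ∀ l, net.t l < (1 / 2) * Real.log (1 + p' l / net.σ l) := by
    intro l
    by_cases h : l = l0
    · rw [h, hp'l0]
      have hσl := net.hσ l0
      have hposarg : 0 < 1 + pstar l0 / net.σ l0 := by
        have : 0 ≤ pstar l0 / net.σ l0 := div_nonneg (le_trans (hexpge l0) (hp l0)) hσl.le
        linarith
      have hlog : Real.log (1 + pstar l0 / net.σ l0) < Real.log (1 + (pstar l0 + ε) / net.σ l0) := by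
        apply Real.log_lt_log hposarg
        have : pstar l0 / net.σ l0 < (pstar l0 + ε) / net.σ l0 :=
          div_lt_div_of_pos_right (by linarith) hσl
        linarith
      have := hcond l0
      linarith
    · rw [hp'ne l h]; exact hcond l
  have hsumlt : (∑ l, net.t l / ((1 / 2) * Real.log (1 + p' l / net.σ l) - net.t l)) <
      ∑ l, net.t l / ((1 / 2) * Real.log (1 + pstar l / net.σ l) - net.t l) := by
    apply Finset.sum_lt_sum
    · intro l _
      by_cases h : l = l0
      · rw [h]
        apply le_of_lt
        apply div_lt_div_of_pos_left (net.ht l0) (by linarith [hcond l0])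
        have h1 := hcond l0
        have h2 := hcond' l0
        have hσl := net.hσ l0
        have hposarg : 0 < 1 + pstar l0 / net.σ l0 := by
          have : 0 ≤ pstar l0 / net.σ l0 := div_nonneg (le_trans (hexpge l0) (hp l0)) hσl.le
          linarith
        have hlog : Real.log (1 + pstar l0 / net.σ l0) < Real.log (1 + p' l0 / net.σ l0) := by
          apply Real.log_lt_log hposarg
          rw [hp'l0]
          have : pstar l0 / net.σ l0 < (pstar l0 + ε) / net.σ l0 :=
            div_lt_div_of_pos_right (by linarith) hσl
          linarith
        linarith
      · rw [hp'ne l h]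
    · refine ⟨l0, Finset.mem_univ l0, ?_⟩
      apply div_lt_div_of_pos_left (net.ht l0) (by linarith [hcond l0])
      have hσl := net.hσ l0
      have hposarg : 0 < 1 + pstar l0 / net.σ l0 := by
        have : 0 ≤ pstar l0 / net.σ l0 := div_nonneg (le_trans (hexpge l0) (hp l0)) hσl.le
        linarith
      have hlog : Real.log (1 + pstar l0 / net.σ l0) < Real.log (1 + p' l0 / net.σ l0) := by
        apply Real.log_lt_log hposarg
        rw [hp'l0]
        have : pstar l0 / net.σ l0 < (pstar l0 + ε) / net.σ l0 :=
          div_lt_div_of_pos_right (by linarith) hσl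
        linarith
      linarith
  have hsumpos : 0 < ∑ l, net.t l / ((1 / 2) * Real.log (1 + pstar l / net.σ l) - net.t l) := by
    apply Finset.sum_pos
    · intro l _
      exact div_pos (net.ht l) (by linarith [hcond l])
    · exact ⟨l0, Finset.mem_univ l0⟩
  have hdlt : net.Delay p' < net.Delay pstar := by
    simp only [Net.Delay, if_pos hcond', if_pos hcond]
    exact (ENNReal.ofReal_lt_ofReal_iff hsumpos).mpr hsumlt
  exact absurd (hopt p' ystar hfeas') (not_le.mpr hdlt)
end

section
/- If a strictly feasible pair exists, then at every minimizer (p*, y*) of the network delay, for every node n and any two data links l, m outgoing from n, the marginal quantities are equal: g_l(p*_l) = g_m(p*_m), where g_l(p) = (t_l/(2σ_l)) · ((1/2)·ln(1 + p/σ_l) − t_l)^{−2} · (1 + p/σ_l)^{−1}. -/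
open BigOperators ENNReal

/-! Since some pair has finite delay, so does a minimizer, hence every link power there lies
strictly above its threshold `σ_l (e^{2 t_l} - 1)`. Moving power `ε` from `l` to `m` keeps every
node budget unchanged, so for small `ε` the perturbed pair stays feasible and
`ε ↦ D(p* + ε (e_m - e_l))` has a local minimum at `0`. Its derivative there is `g_l - g_m`,
because `-g` is the derivative of the delay `t / ((1/2) ln(1 + p/σ) - t)` of a single link. -/

open Real Filter Topology

noncomputable def linkDelay (t σ p : ℝ) : ℝ :=
  t / ((1 / 2) * Real.log (1 + p / σ) - t)

lemma one_add_div_pos {σ p : ℝ} (hσ : 0 < σ) (hp : -σ < p) : 0 < 1 + p / σ := by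
  rw [← div_self hσ.ne', ← add_div]
  exact div_pos (by linarith) hσ

lemma lt_half_log_iff {t σ p : ℝ} (hσ : 0 < σ) (hp : -σ < p) :
    t < (1 / 2) * Real.log (1 + p / σ) ↔ σ * (exp (2 * t) - 1) < p := by
  calc t < (1 / 2) * Real.log (1 + p / σ) ↔ exp (2 * t) < 1 + p / σ := by
        rw [← Real.lt_log_iff_exp_lt (one_add_div_pos hσ hp)]; constructor <;> intro h <;> linarith
    _ ↔ σ * (exp (2 * t) - 1) < p := by
        rw [← sub_lt_iff_lt_add', lt_div_iff₀ hσ, mul_comm]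

lemma neg_lt_of_mul_exp_sub_one_le {t σ p : ℝ} (hσ : 0 < σ) (hp : σ * (exp (2 * t) - 1) ≤ p) :
    -σ < p := by
  nlinarith [Real.exp_pos (2 * t)]

lemma linkDelay_nonneg {t σ p : ℝ} (ht : 0 ≤ t) (hσ : 0 < σ) (hp : σ * (exp (2 * t) - 1) < p) :
    0 ≤ linkDelay t σ p :=
  div_nonneg ht (sub_nonneg.2 ((lt_half_log_iff hσ (neg_lt_of_mul_exp_sub_one_le hσ hp.le)).2 hp).le)

lemma hasDerivAt_linkDelay {t σ p : ℝ} (hσ : 0 < σ) (hp : σ * (exp (2 * t) - 1) < p) :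
    HasDerivAt (linkDelay t σ) (-gMarg t σ p) p := by
  have hp' := neg_lt_of_mul_exp_sub_one_le hσ hp.le
  have hu := one_add_div_pos hσ hp'
  have hw : 0 < (1 / 2) * Real.log (1 + p / σ) - t := sub_pos.2 ((lt_half_log_iff hσ hp').2 hp)
  have hinner : HasDerivAt (fun x => (1 / 2) * Real.log (1 + x / σ) - t)
      ((1 / 2) * ((1 / σ) / (1 + p / σ))) p :=
    ((((hasDerivAt_id p).div_const σ).const_add 1).log hu.ne').const_mul _ |>.sub_const t
  refine ((hasDerivAt_const p t).div hinner hw.ne').congr_deriv ?_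
  rw [gMarg]
  generalize 1 + p / σ = u at hu hw ⊢
  generalize (1 / 2) * Real.log u - t = w at hw ⊢
  field_simp
  ring

namespace Net

variable (net : Net)

noncomputable def minPower (l : net.L) : ℝ := net.σ l * (exp (2 * net.t l) - 1)

variable {net}

lemma delay_eq_ofReal {p : net.L → ℝ} (hp : ∀ l, net.minPower l < p l) :
    net.Delay p = ENNReal.ofReal (∑ l, linkDelay (net.t l) (net.σ l) (p l)) :=
  if_pos fun l =>
    (lt_half_log_iff (net.hσ l) (neg_lt_of_mul_exp_sub_one_le (net.hσ l) (hp l).le)).2 (hp l)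

lemma minPower_lt_of_delay_ne_top {p : net.L → ℝ} (hp : ∀ l, net.minPower l ≤ p l)
    (h : net.Delay p ≠ ⊤) (l : net.L) : net.minPower l < p l := by
  have hcond : ∀ l, net.t l < (1 / 2) * Real.log (1 + p l / net.σ l) := by
    by_contra hcond
    exact h (if_neg hcond)
  exact (lt_half_log_iff (net.hσ l) (neg_lt_of_mul_exp_sub_one_le (net.hσ l) (hp l))).1 (hcond l)

lemma IsMinimizer.minPower_lt {p : net.L → ℝ} {y : net.Q → ℝ} (hmin : net.IsMinimizer p y)
    (hsf : ∃ p y, net.StrictFeasible p y) (l : net.L) : net.minPower l < p l := by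
  obtain ⟨p₀, y₀, hfeas₀, hp₀⟩ := hsf
  refine minPower_lt_of_delay_ne_top hmin.1.2.1 (ne_top_of_le_ne_top ?_ (hmin.2 p₀ y₀ hfeas₀)) l
  rw [delay_eq_ofReal hp₀]
  exact ENNReal.ofReal_ne_top

lemma Feasible.of_nodeSum_eq {p p' : net.L → ℝ} {y : net.Q → ℝ} (h : net.Feasible p y)
    (hp' : ∀ l, net.minPower l ≤ p' l)
    (hsum : ∀ n, ∑ l ∈ Finset.univ.filter (fun l => net.startD l = n), p' l =
      ∑ l ∈ Finset.univ.filter (fun l => net.startD l = n), p l) :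
    net.Feasible p' y :=
  ⟨h.1, hp', fun n => hsum n ▸ h.2.2 n⟩

lemma IsMinimizer.isLocalMin_delay_shift {p : net.L → ℝ} {y : net.Q → ℝ}
    (hmin : net.IsMinimizer p y) (hsf : ∃ p y, net.StrictFeasible p y) {c : net.L → ℝ}
    (hc : ∀ n, ∑ l ∈ Finset.univ.filter (fun l => net.startD l = n), c l = 0) :
    IsLocalMin (fun ε => ∑ l, linkDelay (net.t l) (net.σ l) (p l + ε * c l)) 0 := by
  have hnear : ∀ᶠ ε in 𝓝 (0 : ℝ), ∀ l, net.minPower l < p l + ε * c l :=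
    eventually_all.2 fun l => Tendsto.eventually_const_lt (hmin.minPower_lt hsf l)
      ((continuous_const.add (continuous_id.mul continuous_const)).tendsto' 0 (p l) (by simp))
  filter_upwards [hnear] with ε hε
  have hfeas : net.Feasible (fun l => p l + ε * c l) y :=
    hmin.1.of_nodeSum_eq (fun l => (hε l).le) fun n => by
      simp only [Finset.sum_add_distrib, ← Finset.mul_sum, hc n, mul_zero, add_zero]
  have hle := hmin.2 _ _ hfeas
  have hnonneg : 0 ≤ ∑ l, linkDelay (net.t l) (net.σ l) (p l + ε * c l) :=
    Finset.sum_nonneg fun l _ => linkDelay_nonneg (net.ht l).le (net.hσ l) (hε l)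
  rw [delay_eq_ofReal (hmin.minPower_lt hsf), delay_eq_ofReal hε,
    ENNReal.ofReal_le_ofReal_iff hnonneg] at hle
  simpa only [zero_mul, add_zero] using hle

end Net

/-- If a strictly feasible pair exists, then at every minimizer
`(p*, y*)` of the network delay, for every node `n` and any two outgoing data
links `l, m` of `n`, the marginal quantities are equal: `g_l(p*_l) = g_m(p*_m)`. -/
theorem minimizer_equal_marginals (net : Net)
    (hsf : ∃ p y, net.StrictFeasible p y)
    (pstar : net.L → ℝ) (ystar : net.Q → ℝ)
    (hmin : net.IsMinimizer pstar ystar) :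
    ∀ (n : net.N) (l m : net.L), net.startD l = n → net.startD m = n →
      gMarg (net.t l) (net.σ l) (pstar l) = gMarg (net.t m) (net.σ m) (pstar m) := by
  classical
  intro n l m hl hm
  set g : net.L → ℝ := fun k => gMarg (net.t k) (net.σ k) (pstar k)
  set c : net.L → ℝ := Pi.single m 1 - Pi.single l 1
  have hc : ∀ n', ∑ k ∈ Finset.univ.filter (fun k => net.startD k = n'), c k = 0 := by
    intro n'
    simp [c, hl, hm]
  have hderiv : HasDerivAt (fun ε => ∑ k, linkDelay (net.t k) (net.σ k) (pstar k + ε * c k))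
      (∑ k, -g k * c k) 0 :=
    HasDerivAt.fun_sum fun k _ =>
      (hasDerivAt_linkDelay (net.hσ k) (hmin.minPower_lt hsf k)).comp_of_eq 0
        (by simpa using ((hasDerivAt_id (0 : ℝ)).mul_const (c k)).const_add (pstar k))
        (by simp)
  have hsum : ∑ k, -g k * c k = g l - g m := by
    simp only [c, Pi.sub_apply, Pi.single_apply, mul_sub, mul_ite, mul_one, mul_zero,
      Finset.sum_sub_distrib, Finset.sum_ite_eq', Finset.mem_univ, ↓reduceIte, sub_neg_eq_add]
    ring
  rw [hsum] at hderiv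
  exact sub_eq_zero.1 ((hmin.isLocalMin_delay_shift hsf hc).hasDerivAt_eq_zero hderiv)
end

section
/- For every t > 0, σ > 0 and λ > 0, there exists a unique p > σ(e^{2t} − 1) satisfying the stationarity equation (t/(2σ)) · ((1/2)·ln(1 + p/σ) − t)^{−2} · (1 + p/σ)^{−1} = λ; moreover, setting r = (1/2)·ln(1 + p/σ) − t, this unique solution satisfies r > 0, r·e^{r} = √(t·e^{−2t}/(2λσ)), and p = σ(e^{2(r + t)} − 1). -/
/-!
Substitute `r = ½ log (1 + p/σ) - t`. This is a bijection from `p > σ (e^{2t} - 1)` onto `r > 0`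
with inverse `p = σ (e^{2(r+t)} - 1)`, and since `1 + p/σ = e^{2(r+t)}` the stationarity equation
becomes `(r e^r)² = t e^{-2t} / (2λσ)`. As `r ↦ r e^r` increases strictly from `0` to `∞` on
`[0, ∞)`, there is exactly one such `r > 0`.
-/

open Real Set

theorem strictMonoOn_mul_exp : StrictMonoOn (fun r : ℝ => r * exp r) (Ici 0) :=
  fun a ha b _ hab =>
    calc a * exp a ≤ a * exp b := mul_le_mul_of_nonneg_left (exp_le_exp.2 hab.le) ha
      _ < b * exp b := mul_lt_mul_of_pos_right hab (exp_pos b)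

theorem existsUnique_pos_mul_exp_eq {c : ℝ} (hc : 0 < c) : ∃! r : ℝ, 0 < r ∧ r * exp r = c := by
  have hc_le : c ≤ c * exp c := le_mul_of_one_le_right hc.le (one_le_exp hc.le)
  obtain ⟨r, hr, hrc⟩ := intermediate_value_Icc hc.le
    (continuous_id.mul continuous_exp).continuousOn (by simpa using ⟨hc.le, hc_le⟩)
  have hr_pos : 0 < r := hr.1.lt_of_ne (by rintro rfl; simp at hrc; linarith)
  refine ⟨r, ⟨hr_pos, hrc⟩, fun s ⟨hs, hsc⟩ => ?_⟩
  exact strictMonoOn_mul_exp.injOn hs.le hr_pos.le (hsc.trans hrc.symm)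

theorem lt_one_add_div_iff {a p σ : ℝ} (hσ : 0 < σ) : a < 1 + p / σ ↔ σ * (a - 1) < p := by
  rw [← sub_lt_iff_lt_add', lt_div_iff₀ hσ, mul_comm]

section HalfLog

variable {t x : ℝ}

theorem half_log_sub_pos (hx : exp (2 * t) < x) : 0 < 1 / 2 * log x - t := by
  have := (lt_log_iff_exp_lt ((exp_pos _).trans hx)).2 hx
  linarith

theorem exp_two_mul_half_log_sub_add (hx : 0 < x) : exp (2 * (1 / 2 * log x - t + t)) = x := by
  nth_rewrite 2 [← exp_log hx]
  ring_nf

theorem half_log_exp_two_mul_sub (r : ℝ) : 1 / 2 * log (exp (2 * (r + t))) - t = r := by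
  rw [log_exp]
  ring

end HalfLog

theorem div_sq_div_exp_eq_iff_mul_exp_eq {t σ lam r : ℝ} (hσ : σ ≠ 0) (hlam : lam ≠ 0)
    (hr : 0 < r) :
    t / (2 * σ) / r ^ 2 / exp (2 * (r + t)) = lam ↔
      r * exp r = sqrt (t * exp (-2 * t) / (2 * lam * σ)) := by
  have hexp : exp (2 * (r + t)) = exp r ^ 2 * exp (2 * t) := by
    rw [← exp_nat_mul, ← exp_add]; ring_nf
  have hexp_neg : exp (-2 * t) = (exp (2 * t))⁻¹ := by rw [← exp_neg]; ring_nf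
  rw [eq_comm (b := sqrt _), sqrt_eq_iff_mul_self_eq_of_pos (by positivity), hexp, hexp_neg]
  field_simp
  constructor <;> intro h <;> linarith

theorem stationarity_iff_mul_exp_eq {t σ lam x : ℝ} (hσ : σ ≠ 0) (hlam : lam ≠ 0)
    (hx : exp (2 * t) < x) :
    t / (2 * σ) / (1 / 2 * log x - t) ^ 2 / x = lam ↔
      (1 / 2 * log x - t) * exp (1 / 2 * log x - t) =
        sqrt (t * exp (-2 * t) / (2 * lam * σ)) := by
  have h := div_sq_div_exp_eq_iff_mul_exp_eq (t := t) hσ hlam (half_log_sub_pos hx)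
  rwa [exp_two_mul_half_log_sub_add ((exp_pos _).trans hx)] at h

theorem stationarity_solution_spec {t σ lam p : ℝ} (hσ : 0 < σ) (hlam : lam ≠ 0)
    (hp : σ * (exp (2 * t) - 1) < p)
    (hsol : t / (2 * σ) / (1 / 2 * log (1 + p / σ) - t) ^ 2 / (1 + p / σ) = lam) :
    0 < 1 / 2 * log (1 + p / σ) - t ∧
      (1 / 2 * log (1 + p / σ) - t) * exp (1 / 2 * log (1 + p / σ) - t) =
        sqrt (t * exp (-2 * t) / (2 * lam * σ)) ∧
      p = σ * (exp (2 * (1 / 2 * log (1 + p / σ) - t + t)) - 1) := by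
  have hx := (lt_one_add_div_iff hσ).2 hp
  refine ⟨half_log_sub_pos hx, (stationarity_iff_mul_exp_eq hσ.ne' hlam hx).1 hsol, ?_⟩
  rw [exp_two_mul_half_log_sub_add ((exp_pos _).trans hx)]
  field_simp
  ring

/-- For every `t > 0`, `σ > 0` and `λ > 0`, there exists a unique
`p > σ(e^{2t} − 1)` satisfying the stationarity equation
`(t/(2σ)) · ((1/2)·ln(1 + p/σ) − t)^{−2} · (1 + p/σ)^{−1} = λ`; moreover, setting
`r = (1/2)·ln(1 + p/σ) − t`, this unique solution satisfies `r > 0`,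
`r·e^r = √(t·e^{−2t}/(2λσ))`, and `p = σ(e^{2(r + t)} − 1)`. -/
theorem stationarity_unique_solution (t σ lam : ℝ) (ht : 0 < t) (hσ : 0 < σ)
    (hlam : 0 < lam) :
    (∃! p : ℝ, σ * (Real.exp (2 * t) - 1) < p ∧
        t / (2 * σ) / ((1 / 2) * Real.log (1 + p / σ) - t) ^ 2 / (1 + p / σ) = lam) ∧
    (∀ p : ℝ, σ * (Real.exp (2 * t) - 1) < p →
        t / (2 * σ) / ((1 / 2) * Real.log (1 + p / σ) - t) ^ 2 / (1 + p / σ) = lam →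
        0 < (1 / 2) * Real.log (1 + p / σ) - t ∧
        ((1 / 2) * Real.log (1 + p / σ) - t) *
            Real.exp ((1 / 2) * Real.log (1 + p / σ) - t) =
          Real.sqrt (t * Real.exp (-2 * t) / (2 * lam * σ)) ∧
        p = σ * (Real.exp (2 * (((1 / 2) * Real.log (1 + p / σ) - t) + t)) - 1)) := by
  refine ⟨?_, fun p hp hsol => stationarity_solution_spec hσ hlam.ne' hp hsol⟩
  obtain ⟨r, ⟨hr, hrc⟩, hr_unique⟩ :=
    existsUnique_pos_mul_exp_eq (c := sqrt (t * exp (-2 * t) / (2 * lam * σ))) (by positivity)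
  have hthreshold : exp (2 * t) < exp (2 * (r + t)) := exp_lt_exp.2 (by linarith)
  have hx : 1 + σ * (exp (2 * (r + t)) - 1) / σ = exp (2 * (r + t)) := by
    field_simp
    ring
  refine ⟨σ * (exp (2 * (r + t)) - 1), ⟨?_, ?_⟩, fun p ⟨hp, hsol⟩ => ?_⟩
  · exact mul_lt_mul_of_pos_left (sub_lt_sub_right hthreshold 1) hσ
  · rw [hx, stationarity_iff_mul_exp_eq hσ.ne' hlam.ne' hthreshold, half_log_exp_two_mul_sub]
    exact hrc
  · obtain ⟨hp_pos, hpc, hp_eq⟩ := stationarity_solution_spec hσ hlam.ne' hp hsol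
    rw [hp_eq, hr_unique _ ⟨hp_pos, hpc⟩]
end
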